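/- arXiv:2601.01453 — 6 statements merged into one kernel-verified Lean document; each statement's English description precedes it below -/
import Mathlib

section
/- Let (Θ, μ) be a σ-finite measure space and X a Banach space. Suppose that for every m ∈ Θ we are given a family (G_m(t))_{t≥0} of bounded linear operators on X such that G_m(0) = I, G_m(t+s) = G_m(t)∘G_m(s) for all s,t ≥ 0, and t ↦ G_m(t)u is continuous on [0,∞) for every u ∈ X. Assume there is a locally bounded function M : [0,∞) → [0,∞) such that ‖G_m(t)‖ ≤ M(t) for all m ∈ Θ and t ≥ 0, and that for every t ≥ 0 and every Bochner-integrable u : Θ → X the function m ↦ G_m(t)(u(m)) is Bochner measurable. Then for every t ≥ 0 the assignment (G̃(t)u)(m) := G_m(t)(u(m)) defines a bounded linear operator on L¹(Θ, μ; X) with operator norm at most M(t), the family satisfies G̃(0) = I and G̃(t+s) = G̃(t)∘G̃(s) for all s,t ≥ 0, and for every u ∈ L¹(Θ, μ; X) one has ‖G̃(t)u − u‖_{L¹} → 0 as t → 0⁺ (i.e., (G̃(t))_{t≥0} is a strongly continuous semigroup on L¹(Θ, μ; X)). -/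
/-!
For each `t ≥ 0` the operators `G m t` are uniformly bounded by `M t`, so `u ↦ (m ↦ G m t (u m))`
is a bounded operator on `L¹` of norm at most `M t`, and the algebraic identities `G̃ 0 = 1`,
`G̃ (t + s) = G̃ t ∘ G̃ s` hold because they hold pointwise in `m`. Strong continuity follows from
dominated convergence: for `t ∈ (0, 1]` the integrand `‖G m t (u m) - u m‖` tends to `0` for each `m`
and is dominated by `(sup_{[0,1]} M + 1) ‖u m‖`.
-/

open MeasureTheory Filter Topology

namespace MeasureTheory.Lp

variable {𝕜 Θ E F H : Type*} [NontriviallyNormedField 𝕜] [MeasurableSpace Θ] {μ : Measure Θ}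
  {p : ENNReal}
  [NormedAddCommGroup E] [NormedSpace 𝕜 E] [NormedAddCommGroup F] [NormedSpace 𝕜 F]
  [NormedAddCommGroup H] [NormedSpace 𝕜 H]

section Pointwise

variable {A : Θ → E →L[𝕜] F} {C : ℝ}

theorem memLp_pointwise (hA : ∀ m, ‖A m‖ ≤ C)
    (hAm : ∀ u : Lp E p μ, AEStronglyMeasurable (fun m => A m (u m)) μ) (u : Lp E p μ) :
    MemLp (fun m => A m (u m)) p μ :=
  (Lp.memLp u).of_le_mul (hAm u) <| ae_of_all _ fun m => (A m).le_of_opNorm_le (hA m) _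

variable [Fact (1 ≤ p)]

variable (A) in
noncomputable def pointwiseCLM (hA : ∀ m, ‖A m‖ ≤ C)
    (hAm : ∀ u : Lp E p μ, AEStronglyMeasurable (fun m => A m (u m)) μ) :
    Lp E p μ →L[𝕜] Lp F p μ :=
  LinearMap.mkContinuous
    { toFun := fun u => (memLp_pointwise hA hAm u).toLp _
      map_add' := fun u v => by
        refine Lp.ext ?_
        filter_upwards [(memLp_pointwise hA hAm (u + v)).coeFn_toLp,
          (memLp_pointwise hA hAm u).coeFn_toLp, (memLp_pointwise hA hAm v).coeFn_toLp,
          Lp.coeFn_add u v, Lp.coeFn_add ((memLp_pointwise hA hAm u).toLp _)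
            ((memLp_pointwise hA hAm v).toLp _)] with m huv hu hv hadd hadd'
        rw [huv, hadd', Pi.add_apply, hu, hv, hadd, Pi.add_apply, map_add]
      map_smul' := fun c u => by
        refine Lp.ext ?_
        filter_upwards [(memLp_pointwise hA hAm (c • u)).coeFn_toLp,
          (memLp_pointwise hA hAm u).coeFn_toLp, Lp.coeFn_smul c u,
          Lp.coeFn_smul c ((memLp_pointwise hA hAm u).toLp _)] with m hcu hu hsmul hsmul'
        rw [hcu, RingHom.id_apply, hsmul', Pi.smul_apply, hu, hsmul, Pi.smul_apply, map_smul] }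
    C fun u => Lp.norm_le_mul_norm_of_ae_le_mul <| by
      filter_upwards [(memLp_pointwise hA hAm u).coeFn_toLp] with m hu
      exact hu ▸ (A m).le_of_opNorm_le (hA m) _

theorem coeFn_pointwiseCLM (hA : ∀ m, ‖A m‖ ≤ C)
    (hAm : ∀ u : Lp E p μ, AEStronglyMeasurable (fun m => A m (u m)) μ) (u : Lp E p μ) :
    ⇑(pointwiseCLM A hA hAm u) =ᵐ[μ] fun m => A m (u m) :=
  (memLp_pointwise hA hAm u).coeFn_toLp

theorem norm_pointwiseCLM_le (hC : 0 ≤ C) (hA : ∀ m, ‖A m‖ ≤ C)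
    (hAm : ∀ u : Lp E p μ, AEStronglyMeasurable (fun m => A m (u m)) μ) :
    ‖pointwiseCLM A hA hAm‖ ≤ C :=
  LinearMap.mkContinuous_norm_le _ hC _

theorem pointwiseCLM_eq_id {A : Θ → E →L[𝕜] E} (hA : ∀ m, ‖A m‖ ≤ C)
    (hAm : ∀ u : Lp E p μ, AEStronglyMeasurable (fun m => A m (u m)) μ)
    (hid : ∀ m, A m = ContinuousLinearMap.id 𝕜 E) :
    pointwiseCLM A hA hAm = ContinuousLinearMap.id 𝕜 (Lp E p μ) := by
  refine ContinuousLinearMap.ext fun u => Lp.ext ?_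
  filter_upwards [coeFn_pointwiseCLM hA hAm u] with m hu
  rw [hu, hid m]
  rfl

theorem pointwiseCLM_eq_comp {B : Θ → F →L[𝕜] H} {AB : Θ → E →L[𝕜] H} {D D' : ℝ}
    (hA : ∀ m, ‖A m‖ ≤ C) (hAm : ∀ u : Lp E p μ, AEStronglyMeasurable (fun m => A m (u m)) μ)
    (hB : ∀ m, ‖B m‖ ≤ D) (hBm : ∀ u : Lp F p μ, AEStronglyMeasurable (fun m => B m (u m)) μ)
    (hAB : ∀ m, ‖AB m‖ ≤ D')
    (hABm : ∀ u : Lp E p μ, AEStronglyMeasurable (fun m => AB m (u m)) μ)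
    (hcomp : ∀ m, AB m = (B m).comp (A m)) :
    pointwiseCLM AB hAB hABm = (pointwiseCLM B hB hBm).comp (pointwiseCLM A hA hAm) := by
  refine ContinuousLinearMap.ext fun u => Lp.ext ?_
  filter_upwards [coeFn_pointwiseCLM hAB hABm u,
    coeFn_pointwiseCLM hB hBm (pointwiseCLM A hA hAm u), coeFn_pointwiseCLM hA hAm u]
    with m hABu hBAu hAu
  rw [hABu, ContinuousLinearMap.comp_apply, hBAu, hAu, hcomp m]
  rfl

end Pointwise

theorem tendsto_norm_sub_of_tendsto_pointwise {ι : Type*} {l : Filter ι} [l.IsCountablyGenerated]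
    {A : ι → Θ → E →L[𝕜] E} {C : ℝ} (hAC : ∀ᶠ i in l, ∀ m, ‖A i m‖ ≤ C)
    (hlim : ∀ m x, Tendsto (fun i => A i m x) l (𝓝 x))
    {v : ι → Lp E 1 μ} {u : Lp E 1 μ} (hv : ∀ᶠ i in l, v i =ᵐ[μ] fun m => A i m (u m)) :
    Tendsto (fun i => ‖v i - u‖) l (𝓝 0) := by
  have hnorm : (fun i => ‖v i - u‖) =ᶠ[l] fun i => ∫ m, ‖A i m (u m) - u m‖ ∂μ := by
    filter_upwards [hv] with i hvi
    rw [L1.norm_eq_integral_norm]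
    refine integral_congr_ae ?_
    filter_upwards [Lp.coeFn_sub (v i) u, hvi] with m hsub hvim
    rw [hsub, Pi.sub_apply, hvim]
  refine Tendsto.congr' hnorm.symm ?_
  rw [← integral_zero Θ ℝ (μ := μ)]
  refine tendsto_integral_filter_of_dominated_convergence (fun m => (C + 1) * ‖u m‖) ?_ ?_
    ((L1.integrable_coeFn u).norm.const_mul (C + 1)) (ae_of_all _ fun m => ?_)
  · filter_upwards [hv] with i hvi
    exact (((Lp.aestronglyMeasurable (v i)).congr hvi).sub (Lp.aestronglyMeasurable u)).norm
  · filter_upwards [hAC] with i hi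
    refine ae_of_all _ fun m => ?_
    calc ‖‖A i m (u m) - u m‖‖ ≤ ‖A i m (u m)‖ + ‖u m‖ := by
          rw [norm_norm]; exact norm_sub_le _ _
      _ ≤ C * ‖u m‖ + ‖u m‖ := by gcongr; exact (A i m).le_of_opNorm_le (hi m) _
      _ = (C + 1) * ‖u m‖ := by ring
  · simpa using ((hlim m (u m)).sub_const (u m)).norm

end MeasureTheory.Lp

theorem stmt_0_general
    {Θ : Type*} [MeasurableSpace Θ] (μ : Measure Θ)
    {X : Type*} [NormedAddCommGroup X] [NormedSpace ℝ X]
    (G : Θ → ℝ → X →L[ℝ] X)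
    (hG0 : ∀ m, G m 0 = ContinuousLinearMap.id ℝ X)
    (hGsemi : ∀ m, ∀ t s : ℝ, 0 ≤ t → 0 ≤ s → G m (t + s) = (G m t).comp (G m s))
    (hGcont : ∀ m (u : X), ContinuousOn (fun t => G m t u) (Set.Ici (0 : ℝ)))
    (M : ℝ → ℝ) (hMnonneg : ∀ t, 0 ≤ M t)
    (hMloc : ∀ T : ℝ, 0 ≤ T → ∃ C : ℝ, ∀ t ∈ Set.Icc (0 : ℝ) T, M t ≤ C)
    (hGbound : ∀ m, ∀ t : ℝ, 0 ≤ t → ‖G m t‖ ≤ M t)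
    (hmeas : ∀ t : ℝ, 0 ≤ t → ∀ u : Θ → X, Integrable u μ →
        AEStronglyMeasurable (fun m => G m t (u m)) μ) :
    ∃ Gt : ℝ → (Lp X 1 μ →L[ℝ] Lp X 1 μ),
      (∀ t : ℝ, 0 ≤ t → ∀ u : Lp X 1 μ, ⇑(Gt t u) =ᵐ[μ] fun m => G m t (u m)) ∧
      (∀ t : ℝ, 0 ≤ t → ‖Gt t‖ ≤ M t) ∧
      Gt 0 = ContinuousLinearMap.id ℝ (Lp X 1 μ) ∧
      (∀ t s : ℝ, 0 ≤ t → 0 ≤ s → Gt (t + s) = (Gt t).comp (Gt s)) ∧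
      (∀ u : Lp X 1 μ,
        Tendsto (fun t : ℝ => ‖Gt t u - u‖) (nhdsWithin 0 (Set.Ioi 0)) (nhds 0)) := by
  have hmeasL1 (t : ℝ) (ht : 0 ≤ t) (u : Lp X 1 μ) :
      AEStronglyMeasurable (fun m => G m t (u m)) μ :=
    hmeas t ht u (L1.integrable_coeFn u)
  let T (t : ℝ) (ht : 0 ≤ t) : Lp X 1 μ →L[ℝ] Lp X 1 μ :=
    Lp.pointwiseCLM (G · t) (hGbound · t ht) (hmeasL1 t ht)
  refine ⟨fun t => if ht : 0 ≤ t then T t ht else ContinuousLinearMap.id ℝ _,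
    fun t ht u => ?_, fun t ht => ?_, ?_, fun t s ht hs => ?_, fun u => ?_⟩
  · simpa only [dif_pos ht] using Lp.coeFn_pointwiseCLM _ _ u
  · simpa only [dif_pos ht] using Lp.norm_pointwiseCLM_le (hMnonneg t) _ _
  · simpa only [dif_pos le_rfl] using Lp.pointwiseCLM_eq_id _ _ (hG0 ·)
  · simpa only [dif_pos ht, dif_pos hs, dif_pos (add_nonneg ht hs)] using
      Lp.pointwiseCLM_eq_comp _ _ _ _ _ _ (hGsemi · t s ht hs)
  · obtain ⟨C, hC⟩ := hMloc 1 zero_le_one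
    have hsmall : ∀ᶠ t in 𝓝[>] (0 : ℝ), t ∈ Set.Ioc 0 1 :=
      Ioc_mem_nhdsGT_of_mem (Set.left_mem_Ico.2 one_pos)
    have hright (m : Θ) (x : X) : Tendsto (fun t => G m t x) (𝓝[>] 0) (𝓝 x) := by
      simpa only [hG0 m, ContinuousLinearMap.id_apply] using
        (hGcont m x 0 Set.self_mem_Ici).mono_left (nhdsWithin_mono 0 Set.Ioi_subset_Ici_self)
    refine Lp.tendsto_norm_sub_of_tendsto_pointwise (A := fun t m => G m t) (C := C) ?_ hright ?_
    · filter_upwards [hsmall] with t ht m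
      exact (hGbound m t ht.1.le).trans (hC t ⟨ht.1.le, ht.2⟩)
    · filter_upwards [hsmall] with t ht
      simpa only [dif_pos ht.1.le] using Lp.coeFn_pointwiseCLM _ _ u

/-- Gluing a parameter-dependent family of strongly continuous semigroups, with a
uniform locally bounded growth function, into a strongly continuous semigroup on the
Bochner space `L¹(Θ, μ; X)`. -/
theorem stmt_0
    {Θ : Type*} [MeasurableSpace Θ] (μ : Measure Θ) [SigmaFinite μ]
    {X : Type*} [NormedAddCommGroup X] [NormedSpace ℝ X] [CompleteSpace X]
    (G : Θ → ℝ → X →L[ℝ] X)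
    (hG0 : ∀ m, G m 0 = ContinuousLinearMap.id ℝ X)
    (hGsemi : ∀ m, ∀ t s : ℝ, 0 ≤ t → 0 ≤ s → G m (t + s) = (G m t).comp (G m s))
    (hGcont : ∀ m (u : X), ContinuousOn (fun t => G m t u) (Set.Ici (0 : ℝ)))
    (M : ℝ → ℝ) (hMnonneg : ∀ t, 0 ≤ M t)
    (hMloc : ∀ T : ℝ, 0 ≤ T → ∃ C : ℝ, ∀ t ∈ Set.Icc (0 : ℝ) T, M t ≤ C)
    (hGbound : ∀ m, ∀ t : ℝ, 0 ≤ t → ‖G m t‖ ≤ M t)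
    (hmeas : ∀ t : ℝ, 0 ≤ t → ∀ u : Θ → X, Integrable u μ →
        AEStronglyMeasurable (fun m => G m t (u m)) μ) :
    ∃ Gt : ℝ → (Lp X 1 μ →L[ℝ] Lp X 1 μ),
      (∀ t : ℝ, 0 ≤ t → ∀ u : Lp X 1 μ, ⇑(Gt t u) =ᵐ[μ] fun m => G m t (u m)) ∧
      (∀ t : ℝ, 0 ≤ t → ‖Gt t‖ ≤ M t) ∧
      Gt 0 = ContinuousLinearMap.id ℝ (Lp X 1 μ) ∧
      (∀ t s : ℝ, 0 ≤ t → 0 ≤ s → Gt (t + s) = (Gt t).comp (Gt s)) ∧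
      (∀ u : Lp X 1 μ,
        Tendsto (fun t : ℝ => ‖Gt t u - u‖) (nhdsWithin 0 (Set.Ioi 0)) (nhds 0)) :=
  stmt_0_general μ G hG0 hGsemi hGcont M hMnonneg hMloc hGbound hmeas
end

section
/- Let r₀, l ≥ 0, r ≥ max{r₀, l}, s₀ ≥ 1, β₀ ≥ 1, C > 0, M ≥ 1. Let β : {(m,s) : 0 ≤ m ≤ s} → [0,∞) be measurable and satisfy: (i) ∫₀^s β(m, s) dm ≤ β₀(1 + s^l) for all s > 0; (ii) sup_{s ≥ s₀} s^{−r} ∫₀^s m^r β(m, s) dm ≤ C. Let α₁, α₂ : [0,∞) → [0,∞) be measurable with α₁(m) ≤ α₂(m) ≤ M·α₁(m) for all m. Then for every measurable u : [0,∞) → [0,∞): ∫₀^∞ ( ∫_m^∞ α₂(s) β(m, s) u(s) ds ) (1 + m^r) dm ≤ C̄ ∫₀^∞ α₁(s) u(s) (1 + s^r) ds, where C̄ = M·(β₀(1 + s₀^l) + β₀ + C). -/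
/-!
Replacing `α₂` by `M α₁` and applying Tonelli, the left-hand side is at most
`M ∫_{s>0} α₁(s) u(s) ∫_{0<m<s} β(m,s) (1 + m^r) dm ds`. The inner integral is at most
`K (1 + s^r)` with `K = β₀(1 + s₀^l) + β₀ + C`: for `s ≥ s₀ ≥ 1` bound the two moments by (i) and
(ii) and use `s^l ≤ s^r`; for `s < s₀` use `m^r ≤ s^r`, (i) and `s^l ≤ s₀^l`.
-/

open MeasureTheory Set Function
open scoped ENNReal

theorem lintegral_Ioi_lintegral_Ioi_swap {f : ℝ → ℝ → ℝ≥0∞} (hf : Measurable (uncurry f))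
    (a : ℝ) :
    ∫⁻ x in Ioi a, ∫⁻ y in Ioi x, f x y = ∫⁻ y in Ioi a, ∫⁻ x in Ioo a y, f x y := by
  set T : Set (ℝ × ℝ) := {p | a < p.1 ∧ p.1 < p.2}
  have hT : MeasurableSet T :=
    (measurableSet_lt measurable_const measurable_fst).inter
      (measurableSet_lt measurable_fst measurable_snd)
  have hx : ∀ x, (Ioi a).indicator (fun x => ∫⁻ y in Ioi x, f x y) x
      = ∫⁻ y, T.indicator (uncurry f) (x, y) := by
    intro x
    by_cases h : a < x
    · rw [indicator_of_mem (mem_Ioi.2 h), ← lintegral_indicator measurableSet_Ioi]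
      refine lintegral_congr fun y => ?_
      simp [T, indicator, h]
    · rw [indicator_of_notMem (notMem_Ioi.2 (not_lt.1 h))]
      simp [T, indicator, h]
  have hy : ∀ y, (Ioi a).indicator (fun y => ∫⁻ x in Ioo a y, f x y) y
      = ∫⁻ x, T.indicator (uncurry f) (x, y) := by
    intro y
    by_cases h : a < y
    · rw [indicator_of_mem (mem_Ioi.2 h), ← lintegral_indicator measurableSet_Ioo]
      refine lintegral_congr fun x => ?_
      simp [T, indicator]
    · rw [indicator_of_notMem (notMem_Ioi.2 (not_lt.1 h))]
      have : ∀ x, ¬(a < x ∧ x < y) := fun x hx => h (hx.1.trans hx.2)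
      simp [T, indicator, this]
  rw [← lintegral_indicator measurableSet_Ioi, ← lintegral_indicator measurableSet_Ioi]
  simp_rw [hx, hy]
  exact lintegral_lintegral_swap (hf.indicator hT).aemeasurable

theorem lintegral_Ioc_rpow_mul_le {r : ℝ} (hr : 0 ≤ r) (f : ℝ → ℝ) (s : ℝ) :
    ∫⁻ m in Ioc 0 s, ENNReal.ofReal (m ^ r * f m)
      ≤ ENNReal.ofReal (s ^ r) * ∫⁻ m in Ioc 0 s, ENNReal.ofReal (f m) := by
  rw [← lintegral_const_mul' _ _ ENNReal.ofReal_ne_top]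
  refine setLIntegral_mono' measurableSet_Ioc fun m hm => ?_
  rw [ENNReal.ofReal_mul (Real.rpow_nonneg hm.1.le r)]
  exact mul_le_mul_left (ENNReal.ofReal_le_ofReal (Real.rpow_le_rpow hm.1.le hm.2 hr)) _

theorem lintegral_Ioc_mul_one_add_rpow_le {r l s s₀ β₀ C : ℝ} {g : ℝ → ℝ} (hg : Measurable g)
    (hl : 0 ≤ l) (hlr : l ≤ r) (hs₀ : 1 ≤ s₀) (hβ₀ : 0 ≤ β₀) (hC : 0 ≤ C) (hs : 0 < s)
    (hmass : ∫⁻ m in Ioc 0 s, ENNReal.ofReal (g m) ≤ ENNReal.ofReal (β₀ * (1 + s ^ l)))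
    (hmoment : s₀ ≤ s →
      ∫⁻ m in Ioc 0 s, ENNReal.ofReal (m ^ r * g m) ≤ ENNReal.ofReal (C * s ^ r)) :
    ∫⁻ m in Ioc 0 s, ENNReal.ofReal (g m * (1 + m ^ r))
      ≤ ENNReal.ofReal ((β₀ * (1 + s₀ ^ l) + β₀ + C) * (1 + s ^ r)) := by
  have hsplit : ∫⁻ m in Ioc 0 s, ENNReal.ofReal (g m * (1 + m ^ r))
      ≤ (∫⁻ m in Ioc 0 s, ENNReal.ofReal (g m)) + ∫⁻ m in Ioc 0 s, ENNReal.ofReal (m ^ r * g m) := by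
    rw [← lintegral_add_left hg.ennreal_ofReal]
    refine lintegral_mono fun m => ?_
    rw [mul_one_add, mul_comm (g m)]
    exact ENNReal.ofReal_add_le
  have hsr : 0 ≤ s ^ r := by positivity
  refine hsplit.trans ?_
  rcases le_or_gt s₀ s with hss | hss
  · have hsl : s ^ l ≤ s ^ r := Real.rpow_le_rpow_of_exponent_le (hs₀.trans hss) hlr
    refine (add_le_add hmass (hmoment hss)).trans ?_
    rw [← ENNReal.ofReal_add (by positivity) (by positivity)]
    apply ENNReal.ofReal_le_ofReal
    have : 0 ≤ β₀ * (1 + s₀ ^ l) * (1 + s ^ r) := by positivity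
    nlinarith [mul_le_mul_of_nonneg_left hsl hβ₀]
  · have hsl : s ^ l ≤ s₀ ^ l := Real.rpow_le_rpow hs.le hss.le hl
    refine (add_le_add hmass ((lintegral_Ioc_rpow_mul_le (hl.trans hlr) g s).trans
      (mul_le_mul_right hmass _))).trans ?_
    rw [← ENNReal.ofReal_mul hsr, ← ENNReal.ofReal_add (by positivity) (by positivity)]
    apply ENNReal.ofReal_le_ofReal
    nlinarith [mul_le_mul_of_nonneg_left hsl hβ₀]

theorem lintegral_gain_le {β : ℝ → ℝ → ℝ} (hβ : Measurable (uncurry β)) {a w : ℝ → ℝ}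
    (ha : Measurable a) (ha₀ : ∀ s, 0 ≤ a s) (hw : Measurable w) (hw₀ : ∀ m > 0, 0 ≤ w m) {K : ℝ}
    (hK : ∀ s > 0, ∫⁻ m in Ioc 0 s, ENNReal.ofReal (β m s * w m) ≤ ENNReal.ofReal (K * w s)) :
    ∫⁻ m in Ioi 0, (∫⁻ s in Ioi m, ENNReal.ofReal (a s * β m s)) * ENNReal.ofReal (w m)
      ≤ ENNReal.ofReal K * ∫⁻ s in Ioi 0, ENNReal.ofReal (a s * w s) := by
  have hmeas : Measurable (uncurry fun m s => ENNReal.ofReal (a s) * ENNReal.ofReal (β m s * w m)) :=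
    (ha.comp measurable_snd).ennreal_ofReal.mul (hβ.mul (hw.comp measurable_fst)).ennreal_ofReal
  calc ∫⁻ m in Ioi 0, (∫⁻ s in Ioi m, ENNReal.ofReal (a s * β m s)) * ENNReal.ofReal (w m)
      = ∫⁻ m in Ioi 0, ∫⁻ s in Ioi m, ENNReal.ofReal (a s) * ENNReal.ofReal (β m s * w m) := by
        refine setLIntegral_congr_fun measurableSet_Ioi fun m hm => ?_
        rw [← lintegral_mul_const' _ _ ENNReal.ofReal_ne_top]
        refine lintegral_congr fun s => ?_
        rw [← ENNReal.ofReal_mul' (hw₀ m hm), ← ENNReal.ofReal_mul (ha₀ s), mul_assoc]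
    _ = ∫⁻ s in Ioi 0, ∫⁻ m in Ioo 0 s, ENNReal.ofReal (a s) * ENNReal.ofReal (β m s * w m) :=
        lintegral_Ioi_lintegral_Ioi_swap hmeas 0
    _ = ∫⁻ s in Ioi 0, ENNReal.ofReal (a s) * ∫⁻ m in Ioc 0 s, ENNReal.ofReal (β m s * w m) := by
        refine lintegral_congr fun s => ?_
        rw [lintegral_const_mul' _ _ ENNReal.ofReal_ne_top, setLIntegral_congr Ioo_ae_eq_Ioc]
    _ ≤ ∫⁻ s in Ioi 0, ENNReal.ofReal (a s) * ENNReal.ofReal (K * w s) :=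
        setLIntegral_mono' measurableSet_Ioi fun s hs => mul_le_mul_right (hK s hs) _
    _ = ENNReal.ofReal K * ∫⁻ s in Ioi 0, ENNReal.ofReal (a s * w s) := by
        rw [← lintegral_const_mul' _ _ ENNReal.ofReal_ne_top]
        refine setLIntegral_congr_fun measurableSet_Ioi fun s hs => ?_
        rw [← ENNReal.ofReal_mul (ha₀ s), ← ENNReal.ofReal_mul' (mul_nonneg (ha₀ s) (hw₀ s hs))]
        ring_nf

theorem lintegral_gain_le_of_le_mul {β : ℝ → ℝ → ℝ} (hβ₀ : ∀ m s, 0 ≤ β m s) {a b : ℝ → ℝ}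
    (ha₀ : ∀ s, 0 ≤ a s) {M : ℝ} (hba : ∀ s, b s ≤ M * a s) (w : ℝ → ℝ) :
    ∫⁻ m in Ioi 0, (∫⁻ s in Ioi m, ENNReal.ofReal (b s * β m s)) * ENNReal.ofReal (w m)
      ≤ ENNReal.ofReal M *
        ∫⁻ m in Ioi 0, (∫⁻ s in Ioi m, ENNReal.ofReal (a s * β m s)) * ENNReal.ofReal (w m) := by
  calc ∫⁻ m in Ioi 0, (∫⁻ s in Ioi m, ENNReal.ofReal (b s * β m s)) * ENNReal.ofReal (w m)
      ≤ ∫⁻ m in Ioi 0, (∫⁻ s in Ioi m,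
          ENNReal.ofReal M * ENNReal.ofReal (a s * β m s)) * ENNReal.ofReal (w m) := by
        gcongr with m s
        rw [← ENNReal.ofReal_mul' (mul_nonneg (ha₀ s) (hβ₀ m s)), ← mul_assoc]
        exact ENNReal.ofReal_le_ofReal (mul_le_mul_of_nonneg_right (hba s) (hβ₀ m s))
    _ = _ := by
        rw [← lintegral_const_mul' _ _ ENNReal.ofReal_ne_top]
        refine lintegral_congr fun m => ?_
        rw [lintegral_const_mul' _ _ ENNReal.ofReal_ne_top, mul_assoc]

theorem stmt_8_general
    (r₀ l r s₀ β₀ C M : ℝ)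
    (hl : 0 ≤ l) (hr : max r₀ l ≤ r) (hs₀ : 1 ≤ s₀)
    (hβ₀ : 1 ≤ β₀) (hC : 0 < C)
    (β : ℝ → ℝ → ℝ) (hβmeas : Measurable (Function.uncurry β))
    (hβnonneg : ∀ m s, 0 ≤ β m s)
    (hβ1 : ∀ s > (0 : ℝ), ∫⁻ m in Set.Ioc (0 : ℝ) s, ENNReal.ofReal (β m s)
        ≤ ENNReal.ofReal (β₀ * (1 + s ^ l)))
    (hβ2 : ∀ s ≥ s₀, ∫⁻ m in Set.Ioc (0 : ℝ) s, ENNReal.ofReal (m ^ r * β m s)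
        ≤ ENNReal.ofReal (C * s ^ r))
    (α₁ α₂ : ℝ → ℝ) (hα₁meas : Measurable α₁)
    (hα₁nonneg : ∀ m, 0 ≤ α₁ m)
    (hαle' : ∀ m, α₂ m ≤ M * α₁ m)
    (u : ℝ → ℝ) (hu : Measurable u) (hunonneg : ∀ m, 0 ≤ u m) :
    ∫⁻ m in Set.Ioi (0 : ℝ),
        (∫⁻ s in Set.Ioi m, ENNReal.ofReal (α₂ s * β m s * u s)) *
          ENNReal.ofReal (1 + m ^ r)
      ≤ ENNReal.ofReal (M * (β₀ * (1 + s₀ ^ l) + β₀ + C)) *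
          ∫⁻ s in Set.Ioi (0 : ℝ), ENNReal.ofReal (α₁ s * u s * (1 + s ^ r)) := by
  have hK₀ : 0 ≤ β₀ * (1 + s₀ ^ l) + β₀ + C := by
    have : 0 ≤ s₀ ^ l := by positivity
    nlinarith
  have hK : ∀ s > 0, ∫⁻ m in Ioc 0 s, ENNReal.ofReal (β m s * (1 + m ^ r))
      ≤ ENNReal.ofReal ((β₀ * (1 + s₀ ^ l) + β₀ + C) * (1 + s ^ r)) := fun s hs =>
    lintegral_Ioc_mul_one_add_rpow_le (hβmeas.comp measurable_prodMk_right) hl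
      ((le_max_right r₀ l).trans hr) hs₀ (by linarith) hC.le hs (hβ1 s hs) (hβ2 s)
  have hαu₀ : ∀ s, 0 ≤ α₁ s * u s := fun s => mul_nonneg (hα₁nonneg s) (hunonneg s)
  calc ∫⁻ m in Ioi 0, (∫⁻ s in Ioi m, ENNReal.ofReal (α₂ s * β m s * u s)) * ENNReal.ofReal (1 + m ^ r)
      = ∫⁻ m in Ioi 0, (∫⁻ s in Ioi m, ENNReal.ofReal (α₂ s * u s * β m s))
          * ENNReal.ofReal (1 + m ^ r) := by
        simp only [mul_right_comm _ (β _ _) (u _)]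
    _ ≤ ENNReal.ofReal M * ∫⁻ m in Ioi 0, (∫⁻ s in Ioi m, ENNReal.ofReal (α₁ s * u s * β m s))
          * ENNReal.ofReal (1 + m ^ r) :=
        lintegral_gain_le_of_le_mul hβnonneg hαu₀
          (fun s => by nlinarith [hαle' s, hunonneg s]) _
    _ ≤ ENNReal.ofReal M * (ENNReal.ofReal (β₀ * (1 + s₀ ^ l) + β₀ + C) *
          ∫⁻ s in Ioi 0, ENNReal.ofReal (α₁ s * u s * (1 + s ^ r))) := by
        gcongr
        exact lintegral_gain_le (a := fun s => α₁ s * u s) (w := fun m => 1 + m ^ r) hβmeas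
          (hα₁meas.mul hu) hαu₀ (measurable_const.add (measurable_id.pow_const r))
          (fun m hm => by positivity) hK
    _ = _ := by rw [ENNReal.ofReal_mul' hK₀, mul_assoc]

/-- Weighted `L¹` domination of the fragmentation gain operator by the weighted integral
of the loss rate: under moment bound (ii) and the zeroth-moment bound (i) on the kernel β,
and comparable rates `α₁ ≤ α₂ ≤ M α₁`, one has the stated inequality with
`C̄ = M(β₀(1+s₀^l) + β₀ + C)`. -/
theorem stmt_8
    (r₀ l r s₀ β₀ C M : ℝ)
    (hr₀ : 0 ≤ r₀) (hl : 0 ≤ l) (hr : max r₀ l ≤ r) (hs₀ : 1 ≤ s₀)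
    (hβ₀ : 1 ≤ β₀) (hC : 0 < C) (hM : 1 ≤ M)
    (β : ℝ → ℝ → ℝ) (hβmeas : Measurable (Function.uncurry β))
    (hβnonneg : ∀ m s, 0 ≤ β m s)
    (hβ1 : ∀ s > (0 : ℝ), ∫⁻ m in Set.Ioc (0 : ℝ) s, ENNReal.ofReal (β m s)
        ≤ ENNReal.ofReal (β₀ * (1 + s ^ l)))
    (hβ2 : ∀ s ≥ s₀, ∫⁻ m in Set.Ioc (0 : ℝ) s, ENNReal.ofReal (m ^ r * β m s)
        ≤ ENNReal.ofReal (C * s ^ r))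
    (α₁ α₂ : ℝ → ℝ) (hα₁meas : Measurable α₁) (hα₂meas : Measurable α₂)
    (hα₁nonneg : ∀ m, 0 ≤ α₁ m)
    (hαle : ∀ m, α₁ m ≤ α₂ m) (hαle' : ∀ m, α₂ m ≤ M * α₁ m)
    (u : ℝ → ℝ) (hu : Measurable u) (hunonneg : ∀ m, 0 ≤ u m) :
    ∫⁻ m in Set.Ioi (0 : ℝ),
        (∫⁻ s in Set.Ioi m, ENNReal.ofReal (α₂ s * β m s * u s)) *
          ENNReal.ofReal (1 + m ^ r)
      ≤ ENNReal.ofReal (M * (β₀ * (1 + s₀ ^ l) + β₀ + C)) *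
          ∫⁻ s in Set.Ioi (0 : ℝ), ENNReal.ofReal (α₁ s * u s * (1 + s ^ r)) :=
  stmt_8_general r₀ l r s₀ β₀ C M hl hr hs₀ hβ₀ hC β hβmeas hβnonneg hβ1 hβ2 α₁ α₂ hα₁meas hα₁nonneg
    hαle' u hu hunonneg
end

section
/- Let r₀ ≥ 0, s₀ ≥ 0 and let β : {(m,s) : 0 ≤ m ≤ s} → [0,∞) be measurable. Define c_r(s) := s ∫₀¹ z^r β(z s, s) dz for r ≥ r₀ and s > 0. Assume: (i) sup_{s ≥ s₀} s ∫₀¹ z^{r₀} β(z s, s) dz ≤ C < ∞; (ii) the family {z ↦ s·z^{r₀}·β(z s, s)}_{s ≥ s₀} is uniformly integrable on [0,1], i.e. for every ε > 0 there is δ > 0 such that for every measurable A ⊆ [0,1] with Lebesgue measure less than δ one has sup_{s ≥ s₀} s ∫_A z^{r₀} β(z s, s) dz ≤ ε. Then lim_{r → ∞} sup_{s ≥ s₀} c_r(s) = 0, i.e. the normalized r-th moments c_r(s) tend to 0 as r → ∞ uniformly in s ≥ s₀. -/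
open MeasureTheory Filter

open scoped ENNReal Topology

/-! Write `z ^ r = z ^ (r - r₀) * z ^ r₀` and split `(0, 1]` at a point `a < 1` so close to `1`
that `(a, 1]` is shorter than the modulus of uniform integrability. On `(0, a]` the weight
`z ^ (r - r₀)` is at most `a ^ (r - r₀) → 0`, which kills the `L¹`-bounded family; on `(a, 1]` it
is at most `1`, and uniform integrability makes the integral over this short interval uniformly
small. -/

lemma lintegral_Ioc_rpow_mul_le_s9 {g : ℝ → ℝ≥0∞} {a t : ℝ} (ha₀ : 0 ≤ a) (ha₁ : a ≤ 1)
    (ht : 0 ≤ t) :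
    ∫⁻ z in Set.Ioc 0 1, ENNReal.ofReal (z ^ t) * g z ≤
      ENNReal.ofReal (a ^ t) * (∫⁻ z in Set.Ioc 0 1, g z) + ∫⁻ z in Set.Ioc a 1, g z := by
  rw [← Set.Ioc_union_Ioc_eq_Ioc ha₀ ha₁,
    lintegral_union measurableSet_Ioc (Set.Ioc_disjoint_Ioc_of_le le_rfl)]
  have head : ∫⁻ z in Set.Ioc 0 a, ENNReal.ofReal (z ^ t) * g z ≤
      ENNReal.ofReal (a ^ t) * ∫⁻ z in Set.Ioc 0 a ∪ Set.Ioc a 1, g z := by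
    calc ∫⁻ z in Set.Ioc 0 a, ENNReal.ofReal (z ^ t) * g z
        ≤ ∫⁻ z in Set.Ioc 0 a, ENNReal.ofReal (a ^ t) * g z := by
          refine setLIntegral_mono' measurableSet_Ioc fun z hz => ?_
          gcongr
          exacts [hz.1.le, hz.2]
      _ = ENNReal.ofReal (a ^ t) * ∫⁻ z in Set.Ioc 0 a, g z :=
          lintegral_const_mul' _ _ ENNReal.ofReal_ne_top
      _ ≤ ENNReal.ofReal (a ^ t) * ∫⁻ z in Set.Ioc 0 a ∪ Set.Ioc a 1, g z := by
          gcongr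
          exact Set.subset_union_left
  have tail : ∫⁻ z in Set.Ioc a 1, ENNReal.ofReal (z ^ t) * g z ≤ ∫⁻ z in Set.Ioc a 1, g z := by
    refine setLIntegral_mono' measurableSet_Ioc fun z hz => ?_
    have hz₀ : 0 ≤ z := ha₀.trans hz.1.le
    calc ENNReal.ofReal (z ^ t) * g z ≤ 1 * g z := by
          gcongr
          exact ENNReal.ofReal_le_one.mpr (Real.rpow_le_one hz₀ hz.2 ht)
      _ = g z := one_mul _
  exact add_le_add head tail

lemma exists_pos_ofReal_add_self_le {ε : ℝ≥0∞} (hε : 0 < ε) :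
    ∃ e > (0 : ℝ), ENNReal.ofReal e + ENNReal.ofReal e ≤ ε := by
  obtain ⟨r, -, hr₀, hrε⟩ := ENNReal.lt_iff_exists_real_btwn.mp hε
  have hr : 0 < r := ENNReal.ofReal_pos.mp hr₀
  refine ⟨r / 2, half_pos hr, ?_⟩
  rw [← ENNReal.ofReal_add (half_pos hr).le (half_pos hr).le, add_halves]
  exact hrε.le

theorem tendsto_iSup_lintegral_rpow_mul_of_uniformIntegrable {ι : Type*}
    (g : ι → ℝ → ℝ≥0∞) {C : ℝ≥0∞} (hC : C ≠ ∞)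
    (hbound : ∀ i, ∫⁻ z in Set.Ioc 0 1, g i z ≤ C)
    (hUI : ∀ ε > (0 : ℝ), ∃ δ > (0 : ℝ), ∀ A ⊆ Set.Ioc (0 : ℝ) 1, MeasurableSet A →
        volume A < ENNReal.ofReal δ → ∀ i, ∫⁻ z in A, g i z ≤ ENNReal.ofReal ε) :
    Tendsto (fun t : ℝ => ⨆ i, ∫⁻ z in Set.Ioc 0 1, ENNReal.ofReal (z ^ t) * g i z)
      atTop (𝓝 0) := by
  rw [ENNReal.tendsto_nhds_zero]
  intro ε hε
  obtain ⟨e, he, heε⟩ := exists_pos_ofReal_add_self_le hε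
  obtain ⟨δ, hδ, hδUI⟩ := hUI e he
  set a : ℝ := 1 - min δ 1 / 2 with ha
  have ha₀ : 0 ≤ a := by rw [ha]; linarith [min_le_right δ 1]
  have ha₁ : a < 1 := by rw [ha]; linarith [lt_min hδ one_pos]
  have htail : ∀ i, ∫⁻ z in Set.Ioc a 1, g i z ≤ ENNReal.ofReal e := by
    refine hδUI _ (Set.Ioc_subset_Ioc_left ha₀) measurableSet_Ioc ?_
    rw [Real.volume_Ioc, ENNReal.ofReal_lt_ofReal_iff hδ, ha]
    linarith [min_le_left δ 1, lt_min hδ one_pos]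
  have hhead : Tendsto (fun t : ℝ => ENNReal.ofReal (a ^ t) * C) atTop (𝓝 0) := by
    simpa using (ENNReal.Tendsto.mul_const (ENNReal.tendsto_ofReal
      (tendsto_rpow_atTop_of_base_lt_one a (by linarith) ha₁)) (Or.inr hC))
  filter_upwards [eventually_ge_atTop 0, hhead.eventually_le_const (ENNReal.ofReal_pos.mpr he)]
    with t ht hte
  refine iSup_le fun i => ?_
  calc ∫⁻ z in Set.Ioc 0 1, ENNReal.ofReal (z ^ t) * g i z
      ≤ ENNReal.ofReal (a ^ t) * C + ENNReal.ofReal e := by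
        refine (lintegral_Ioc_rpow_mul_le_s9 ha₀ ha₁.le ht).trans ?_
        gcongr
        exacts [hbound i, htail i]
    _ ≤ ε := (add_le_add_left hte _).trans heε

theorem stmt_9_general (r₀ s₀ C : ℝ)
    (β : ℝ → ℝ → ℝ)
    (hbound : ∀ s ≥ s₀, ENNReal.ofReal s *
        ∫⁻ z in Set.Ioc (0 : ℝ) 1, ENNReal.ofReal (z ^ r₀ * β (z * s) s)
      ≤ ENNReal.ofReal C)
    (hUI : ∀ ε > (0 : ℝ), ∃ δ > (0 : ℝ), ∀ A ⊆ Set.Ioc (0 : ℝ) 1, MeasurableSet A →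
        volume A < ENNReal.ofReal δ →
        ∀ s ≥ s₀, ENNReal.ofReal s * ∫⁻ z in A, ENNReal.ofReal (z ^ r₀ * β (z * s) s)
          ≤ ENNReal.ofReal ε) :
    Tendsto
      (fun r : ℝ => ⨆ (s : ℝ) (_ : s₀ ≤ s),
        ENNReal.ofReal s * ∫⁻ z in Set.Ioc (0 : ℝ) 1, ENNReal.ofReal (z ^ r * β (z * s) s))
      atTop (nhds 0) := by
  set g : {s // s₀ ≤ s} → ℝ → ℝ≥0∞ := fun s z =>
    ENNReal.ofReal s * ENNReal.ofReal (z ^ r₀ * β (z * s) s)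
  have hg : ∀ (A : Set ℝ) (s : {s // s₀ ≤ s}), ∫⁻ z in A, g s z =
      ENNReal.ofReal s * ∫⁻ z in A, ENNReal.ofReal (z ^ r₀ * β (z * s) s) := fun A s =>
    lintegral_const_mul' _ _ ENNReal.ofReal_ne_top
  have key := tendsto_iSup_lintegral_rpow_mul_of_uniformIntegrable g ENNReal.ofReal_ne_top
    (fun s => (hg _ s).trans_le (hbound s s.2))
    (fun ε hε => (hUI ε hε).imp fun δ ⟨hδ, h⟩ => ⟨hδ, fun A hA hAm hAδ s =>
      (hg A s).trans_le (h A hA hAm hAδ s s.2)⟩)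
  refine (key.comp (tendsto_atTop_add_const_right _ (-r₀) tendsto_id)).congr fun r => ?_
  simp only [Function.comp_apply, id, iSup_subtype']
  refine iSup_congr fun s => ?_
  rw [← lintegral_const_mul' _ _ ENNReal.ofReal_ne_top]
  refine setLIntegral_congr_fun measurableSet_Ioc fun z hz => ?_
  simp only [g]
  rw [mul_left_comm, ← ENNReal.ofReal_mul (Real.rpow_nonneg hz.1.le _), ← mul_assoc,
    ← Real.rpow_add hz.1, neg_add_cancel_right]

/-- If the family `{z ↦ s z^{r₀} β(zs,s)}_{s ≥ s₀}` is bounded in `L¹(0,1)` and uniformly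
integrable, then the normalized moments `c_r(s) = s∫₀¹ z^r β(zs,s) dz` tend to `0` as
`r → ∞` uniformly in `s ≥ s₀`. -/
theorem stmt_9 (r₀ s₀ C : ℝ) (hr₀ : 0 ≤ r₀) (hs₀ : 0 ≤ s₀) (hC : 0 ≤ C)
    (β : ℝ → ℝ → ℝ) (hβmeas : Measurable (Function.uncurry β))
    (hβnonneg : ∀ m s, 0 ≤ β m s)
    (hbound : ∀ s ≥ s₀, ENNReal.ofReal s *
        ∫⁻ z in Set.Ioc (0 : ℝ) 1, ENNReal.ofReal (z ^ r₀ * β (z * s) s)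
      ≤ ENNReal.ofReal C)
    (hUI : ∀ ε > (0 : ℝ), ∃ δ > (0 : ℝ), ∀ A ⊆ Set.Ioc (0 : ℝ) 1, MeasurableSet A →
        volume A < ENNReal.ofReal δ →
        ∀ s ≥ s₀, ENNReal.ofReal s * ∫⁻ z in A, ENNReal.ofReal (z ^ r₀ * β (z * s) s)
          ≤ ENNReal.ofReal ε) :
    Tendsto
      (fun r : ℝ => ⨆ (s : ℝ) (_ : s₀ ≤ s),
        ENNReal.ofReal s * ∫⁻ z in Set.Ioc (0 : ℝ) 1, ENNReal.ofReal (z ^ r * β (z * s) s))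
      atTop (nhds 0) :=
  stmt_9_general r₀ s₀ C β hbound hUI
end

section
/- Let β : {(m,s) : 0 ≤ m ≤ s} → [0,∞) be measurable, and define c_r(s) := s ∫₀¹ z^r β(z s, s) dz. Suppose there exist s₀ > 0, 0 < η ≤ 1, b₁, b₂ ≥ 0, r₀ ≥ 0 and p > 1 such that for all s ≥ s₀: (i) c_{r₀}(s) ≤ b₁, and (ii) ( ∫_{1−η}^1 β(z s, s)^p dz )^{1/p} ≤ b₂ / s. Then, with q the conjugate exponent (1/p + 1/q = 1), for all r > r₀ and s ≥ s₀ one has c_r(s) ≤ (1 − η)^{r − r₀} b₁ + b₂ (q r + 1)^{−1/q}; in particular lim_{r → ∞} sup_{s ≥ s₀} c_r(s) = 0. -/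
/-!
Split `∫₀¹ z^r β(zs, s) dz` at `z = 1 - η`. On `(0, 1-η]` one has `z^r ≤ (1-η)^{r-r₀} z^{r₀}`,
so that part is controlled by the `r₀`-th moment. On `(1-η, 1]` Hölder's inequality gives
`‖β(·s, s)‖_{L^p} ‖z^r‖_{L^q} ≤ (b₂ / s) (qr+1)^{-1/q}`. Both bounds tend to `0` as `r → ∞`,
uniformly in `s ≥ s₀`.
-/

open MeasureTheory Filter Set Topology

noncomputable def normalizedMoment (β : ℝ → ℝ → ℝ) (r s : ℝ) : ENNReal :=
  ENNReal.ofReal s * ∫⁻ z in Ioc (0 : ℝ) 1, ENNReal.ofReal (z ^ r * β (z * s) s)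

lemma ofReal_mul_ofReal_div_le (s b : ℝ) :
    ENNReal.ofReal s * ENNReal.ofReal (b / s) ≤ ENNReal.ofReal b := by
  rcases le_or_gt s 0 with hs | hs
  · simp [ENNReal.ofReal_of_nonpos hs]
  · rw [← ENNReal.ofReal_mul hs.le, mul_div_cancel₀ _ hs.ne']

lemma lintegral_Ioc_zero_one_rpow {a : ℝ} (ha : -1 < a) :
    ∫⁻ z in Ioc (0 : ℝ) 1, ENNReal.ofReal (z ^ a) = ENNReal.ofReal (1 / (a + 1)) := by
  have hint : IntegrableOn (fun z : ℝ => z ^ a) (Ioc 0 1) := by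
    simpa using (intervalIntegral.intervalIntegrable_rpow' (a := 0) (b := 1) ha).1
  rw [← ofReal_integral_eq_lintegral_ofReal hint
    (ae_restrict_of_forall_mem measurableSet_Ioc fun z hz => Real.rpow_nonneg hz.1.le a),
    ← intervalIntegral.integral_of_le zero_le_one, integral_rpow (Or.inl ha),
    Real.one_rpow, Real.zero_rpow (by linarith), sub_zero]

lemma rpow_le_rpow_sub_mul_rpow {z t r r₀ : ℝ} (hz : 0 < z) (hzt : z ≤ t) (hr : r₀ ≤ r) :
    z ^ r ≤ t ^ (r - r₀) * z ^ r₀ := by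
  calc z ^ r = z ^ (r - r₀) * z ^ r₀ := by rw [← Real.rpow_add hz, sub_add_cancel]
    _ ≤ t ^ (r - r₀) * z ^ r₀ := by gcongr

lemma lintegral_Ioc_rpow_mul_le_s10 {g : ℝ → ℝ} (hg : ∀ z, 0 ≤ g z) {t r r₀ : ℝ} (ht : 0 ≤ t)
    (hr : r₀ ≤ r) :
    ∫⁻ z in Ioc 0 t, ENNReal.ofReal (z ^ r * g z)
      ≤ ENNReal.ofReal (t ^ (r - r₀)) * ∫⁻ z in Ioc 0 t, ENNReal.ofReal (z ^ r₀ * g z) := by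
  rw [← lintegral_const_mul' _ _ ENNReal.ofReal_ne_top]
  refine setLIntegral_mono' measurableSet_Ioc fun z hz => ?_
  rw [← ENNReal.ofReal_mul (Real.rpow_nonneg ht _), ← mul_assoc]
  exact ENNReal.ofReal_le_ofReal
    (mul_le_mul_of_nonneg_right (rpow_le_rpow_sub_mul_rpow hz.1 hz.2 hr) (hg z))

lemma lintegral_Ioc_rpow_rpow_le {a q r : ℝ} (ha : 0 ≤ a) (hq : 0 < q) (hqr : -1 < q * r) :
    (∫⁻ z in Ioc a 1, ENNReal.ofReal (z ^ r) ^ q) ^ (1 / q)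
      ≤ ENNReal.ofReal ((q * r + 1) ^ (-(1 / q))) := by
  have hpow : ∫⁻ z in Ioc a 1, ENNReal.ofReal (z ^ r) ^ q
      = ∫⁻ z in Ioc a 1, ENNReal.ofReal (z ^ (q * r)) := by
    refine setLIntegral_congr_fun measurableSet_Ioc fun z hz => ?_
    have hz : 0 ≤ z := ha.trans hz.1.le
    rw [ENNReal.ofReal_rpow_of_nonneg (Real.rpow_nonneg hz _) hq.le, ← Real.rpow_mul hz, mul_comm]
  calc (∫⁻ z in Ioc a 1, ENNReal.ofReal (z ^ r) ^ q) ^ (1 / q)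
      ≤ (∫⁻ z in Ioc 0 1, ENNReal.ofReal (z ^ (q * r))) ^ (1 / q) := by
        rw [hpow]
        gcongr
    _ = ENNReal.ofReal ((q * r + 1) ^ (-(1 / q))) := by
        rw [lintegral_Ioc_zero_one_rpow hqr, ENNReal.ofReal_rpow_of_nonneg
          (one_div_nonneg.mpr (by linarith)) (one_div_pos.mpr hq).le, one_div (q * r + 1),
          Real.inv_rpow (by linarith), ← Real.rpow_neg (by linarith)]

lemma lintegral_Ioc_mul_rpow_le {p q : ℝ} (hpq : p.HolderConjugate q) {a r : ℝ} (ha : 0 ≤ a)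
    (hqr : -1 < q * r) {f : ℝ → ENNReal} (hf : Measurable f) :
    ∫⁻ z in Ioc a 1, f z * ENNReal.ofReal (z ^ r)
      ≤ (∫⁻ z in Ioc a 1, f z ^ p) ^ (1 / p) * ENNReal.ofReal ((q * r + 1) ^ (-(1 / q))) :=
  (ENNReal.lintegral_mul_le_Lp_mul_Lq _ hpq hf.aemeasurable
    (by fun_prop : Measurable fun z : ℝ => ENNReal.ofReal (z ^ r)).aemeasurable).trans
    (mul_le_mul_right (lintegral_Ioc_rpow_rpow_le ha hpq.symm.pos hqr) _)

theorem lintegral_Ioc_rpow_mul_le_moment_add_Lp {g : ℝ → ℝ} (hg : Measurable g)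
    (hg0 : ∀ z, 0 ≤ g z) {η r₀ r p q : ℝ} (hη0 : 0 ≤ η) (hη1 : η ≤ 1) (hr : r₀ ≤ r)
    (hpq : p.HolderConjugate q) (hqr : -1 < q * r) :
    ∫⁻ z in Ioc 0 1, ENNReal.ofReal (z ^ r * g z)
      ≤ ENNReal.ofReal ((1 - η) ^ (r - r₀)) * (∫⁻ z in Ioc 0 1, ENNReal.ofReal (z ^ r₀ * g z))
        + (∫⁻ z in Ioc (1 - η) 1, ENNReal.ofReal (g z ^ p)) ^ (1 / p)
          * ENNReal.ofReal ((q * r + 1) ^ (-(1 / q))) := by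
  have hη : 0 ≤ 1 - η := by linarith
  conv_lhs => rw [← Ioc_union_Ioc_eq_Ioc hη (by linarith : 1 - η ≤ 1),
    lintegral_union measurableSet_Ioc (Ioc_disjoint_Ioc_of_le le_rfl)]
  refine add_le_add ?_ ?_
  · exact (lintegral_Ioc_rpow_mul_le_s10 hg0 hη hr).trans (by gcongr; linarith)
  · have hgp : ∀ z, ENNReal.ofReal (g z ^ p) = ENNReal.ofReal (g z) ^ p := fun z =>
      (ENNReal.ofReal_rpow_of_nonneg (hg0 z) hpq.nonneg).symm
    simp_rw [hgp, mul_comm _ (g _), ENNReal.ofReal_mul (hg0 _)]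
    exact lintegral_Ioc_mul_rpow_le hpq hη hqr (by fun_prop)

theorem normalizedMoment_le {β : ℝ → ℝ → ℝ} (hβ : Measurable (Function.uncurry β))
    (hβ0 : ∀ m s, 0 ≤ β m s) {s η r₀ r p q b₁ b₂ : ℝ} (hη0 : 0 ≤ η) (hη1 : η ≤ 1)
    (hr : r₀ ≤ r) (hpq : p.HolderConjugate q) (hqr : -1 < q * r) (hb₁ : 0 ≤ b₁) (hb₂ : 0 ≤ b₂)
    (hmom : normalizedMoment β r₀ s ≤ ENNReal.ofReal b₁)
    (hLp : (∫⁻ z in Ioc (1 - η) 1, ENNReal.ofReal (β (z * s) s ^ p)) ^ (1 / p)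
      ≤ ENNReal.ofReal (b₂ / s)) :
    normalizedMoment β r s
      ≤ ENNReal.ofReal ((1 - η) ^ (r - r₀) * b₁ + b₂ * (q * r + 1) ^ (-(1 / q))) := by
  have hη : 0 ≤ 1 - η := by linarith
  have hg : Measurable fun z => β (z * s) s :=
    hβ.comp ((measurable_mul_const s).prodMk measurable_const)
  rw [ENNReal.ofReal_add (mul_nonneg (Real.rpow_nonneg hη _) hb₁)
      (mul_nonneg hb₂ (Real.rpow_nonneg (by linarith) _)),
    ENNReal.ofReal_mul (Real.rpow_nonneg hη _), ENNReal.ofReal_mul hb₂]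
  calc normalizedMoment β r s
      ≤ ENNReal.ofReal s * (ENNReal.ofReal ((1 - η) ^ (r - r₀))
          * (∫⁻ z in Ioc 0 1, ENNReal.ofReal (z ^ r₀ * β (z * s) s))
        + ENNReal.ofReal (b₂ / s) * ENNReal.ofReal ((q * r + 1) ^ (-(1 / q)))) :=
        mul_le_mul_right ((lintegral_Ioc_rpow_mul_le_moment_add_Lp hg (fun z => hβ0 _ _) hη0 hη1
          hr hpq hqr).trans (by gcongr)) _
    _ = ENNReal.ofReal ((1 - η) ^ (r - r₀)) * normalizedMoment β r₀ s
        + ENNReal.ofReal s * ENNReal.ofReal (b₂ / s)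
          * ENNReal.ofReal ((q * r + 1) ^ (-(1 / q))) := by
        rw [normalizedMoment]; ring
    _ ≤ _ := by gcongr; exact ofReal_mul_ofReal_div_le s b₂

lemma tendsto_rpow_sub_mul_add_mul_rpow_neg {a b₁ b₂ r₀ q : ℝ} (ha0 : 0 ≤ a) (ha1 : a < 1)
    (hq : 0 < q) :
    Tendsto (fun r : ℝ => a ^ (r - r₀) * b₁ + b₂ * (q * r + 1) ^ (-(1 / q))) atTop (𝓝 0) := by
  have h₁ : Tendsto (fun r : ℝ => a ^ (r - r₀)) atTop (𝓝 0) :=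
    (tendsto_rpow_atTop_of_base_lt_one a (by linarith) ha1).comp
      (tendsto_atTop_add_const_right atTop (-r₀) tendsto_id)
  have h₂ : Tendsto (fun r : ℝ => (q * r + 1) ^ (-(1 / q))) atTop (𝓝 0) :=
    (tendsto_rpow_neg_atTop (by positivity)).comp
      (tendsto_atTop_add_const_right atTop 1 (tendsto_id.const_mul_atTop hq))
  simpa using (h₁.mul_const b₁).add (h₂.const_mul b₂)

theorem stmt_10_general (s₀ η b₁ b₂ r₀ p q : ℝ)
    (hη0 : 0 < η) (hη1 : η ≤ 1) (hb₁ : 0 ≤ b₁) (hb₂ : 0 ≤ b₂)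
    (hr₀ : 0 ≤ r₀) (hp : 1 < p) (hpq : 1 / p + 1 / q = 1)
    (β : ℝ → ℝ → ℝ) (hβmeas : Measurable (Function.uncurry β))
    (hβnonneg : ∀ m s, 0 ≤ β m s)
    (hmom : ∀ s ≥ s₀, ENNReal.ofReal s *
        ∫⁻ z in Set.Ioc (0 : ℝ) 1, ENNReal.ofReal (z ^ r₀ * β (z * s) s)
      ≤ ENNReal.ofReal b₁)
    (hLp : ∀ s ≥ s₀,
        (∫⁻ z in Set.Ioc (1 - η) 1, ENNReal.ofReal (β (z * s) s ^ p)) ^ (1 / p)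
      ≤ ENNReal.ofReal (b₂ / s)) :
    (∀ r > r₀, ∀ s ≥ s₀, ENNReal.ofReal s *
        ∫⁻ z in Set.Ioc (0 : ℝ) 1, ENNReal.ofReal (z ^ r * β (z * s) s)
      ≤ ENNReal.ofReal ((1 - η) ^ (r - r₀) * b₁ + b₂ * (q * r + 1) ^ (-(1 / q)))) ∧
    Tendsto
      (fun r : ℝ => ⨆ (s : ℝ) (_ : s₀ ≤ s),
        ENNReal.ofReal s * ∫⁻ z in Set.Ioc (0 : ℝ) 1, ENNReal.ofReal (z ^ r * β (z * s) s))
      atTop (nhds 0) := by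
  have hpq' : p.HolderConjugate q :=
    Real.holderConjugate_iff.mpr ⟨hp, by simpa only [one_div] using hpq⟩
  have hq := hpq'.symm.pos
  have bound : ∀ r > r₀, ∀ s ≥ s₀, normalizedMoment β r s
      ≤ ENNReal.ofReal ((1 - η) ^ (r - r₀) * b₁ + b₂ * (q * r + 1) ^ (-(1 / q))) :=
    fun r hr s hs => normalizedMoment_le hβmeas hβnonneg hη0.le hη1 hr.le hpq'
      (by nlinarith) hb₁ hb₂ (hmom s hs) (hLp s hs)
  have hbound_tendsto := ENNReal.tendsto_ofReal
    (tendsto_rpow_sub_mul_add_mul_rpow_neg (b₁ := b₁) (b₂ := b₂) (r₀ := r₀)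
      (by linarith : 0 ≤ 1 - η) (by linarith) hq)
  rw [ENNReal.ofReal_zero] at hbound_tendsto
  refine ⟨bound, tendsto_of_tendsto_of_tendsto_of_le_of_le' tendsto_const_nhds hbound_tendsto
    (Eventually.of_forall fun _ => zero_le) ?_⟩
  filter_upwards [eventually_gt_atTop r₀] with r hr
  exact iSup₂_le (bound r hr)

/-- De la Vallée-Poussin type criterion: a finite normalized moment `c_{r₀}` together with
an `L^p` bound on the kernel near the parent mass forces
`c_r(s) ≤ (1-η)^{r-r₀} b₁ + b₂ (qr+1)^{-1/q}` for `r > r₀, s ≥ s₀`, hence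
`sup_{s ≥ s₀} c_r(s) → 0` as `r → ∞`. -/
theorem stmt_10 (s₀ η b₁ b₂ r₀ p q : ℝ)
    (hs₀ : 0 < s₀) (hη0 : 0 < η) (hη1 : η ≤ 1) (hb₁ : 0 ≤ b₁) (hb₂ : 0 ≤ b₂)
    (hr₀ : 0 ≤ r₀) (hp : 1 < p) (hpq : 1 / p + 1 / q = 1)
    (β : ℝ → ℝ → ℝ) (hβmeas : Measurable (Function.uncurry β))
    (hβnonneg : ∀ m s, 0 ≤ β m s)
    (hmom : ∀ s ≥ s₀, ENNReal.ofReal s *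
        ∫⁻ z in Set.Ioc (0 : ℝ) 1, ENNReal.ofReal (z ^ r₀ * β (z * s) s)
      ≤ ENNReal.ofReal b₁)
    (hLp : ∀ s ≥ s₀,
        (∫⁻ z in Set.Ioc (1 - η) 1, ENNReal.ofReal (β (z * s) s ^ p)) ^ (1 / p)
      ≤ ENNReal.ofReal (b₂ / s)) :
    (∀ r > r₀, ∀ s ≥ s₀, ENNReal.ofReal s *
        ∫⁻ z in Set.Ioc (0 : ℝ) 1, ENNReal.ofReal (z ^ r * β (z * s) s)
      ≤ ENNReal.ofReal ((1 - η) ^ (r - r₀) * b₁ + b₂ * (q * r + 1) ^ (-(1 / q)))) ∧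
    Tendsto
      (fun r : ℝ => ⨆ (s : ℝ) (_ : s₀ ≤ s),
        ENNReal.ofReal s * ∫⁻ z in Set.Ioc (0 : ℝ) 1, ENNReal.ofReal (z ^ r * β (z * s) s))
      atTop (nhds 0) :=
  stmt_10_general s₀ η b₁ b₂ r₀ p q hη0 hη1 hb₁ hb₂ hr₀ hp hpq β hβmeas hβnonneg hmom hLp
end

section
/- Let a₀ > 0, γ > 0, m₀ ≥ 1, and let α₁ : [0,∞) → [0,∞) be measurable with α₁(m) ≥ a₀ m^γ for all m ≥ m₀. Then for all p ≥ 0 and q ≥ 0 there exist constants C₁, C₂ > 0 (depending only on q, γ, a₀, m₀) such that for every measurable g : [0,∞) → [0,∞) and every t > 0: ∫₀^∞ e^{−α₁(m) t} g(m) (1 + m^{p+q}) dm ≤ ( C₁ + C₂ · t^{−q/γ} ) · ∫₀^∞ g(m) (1 + m^p) dm. -/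
/-!
Split the mass range at `m₀`. Below `m₀` the extra weight `m^q` is at most `m₀^q` and the
exponential factor is at most `1`. Above `m₀` the absorption gives `e^{-α₁ t} ≤ e^{-a₀ m^γ t}`,
and `x^r e^{-c x} ≤ (r / (e c))^r` (from `e y ≤ e^y`) with `x = m^γ`, `r = q/γ`, `c = a₀ t`
bounds `m^q e^{-α₁ t}` by `(q / (e γ a₀))^{q/γ} t^{-q/γ}`.
-/

open MeasureTheory Real

theorem rpow_le_mul_exp {r c x : ℝ} (hr : 0 < r) (hc : 0 < c) (hx : 0 ≤ x) :
    x ^ r ≤ (r / (exp 1 * c)) ^ r * exp (c * x) := by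
  have hy : x = r / (exp 1 * c) * (exp 1 * (c * x / r)) := by field_simp
  have hey : 0 ≤ exp 1 * (c * x / r) := by positivity
  calc x ^ r = (r / (exp 1 * c)) ^ r * (exp 1 * (c * x / r)) ^ r := by
        rw [← mul_rpow (by positivity) hey, ← hy]
    _ ≤ (r / (exp 1 * c)) ^ r * exp (c * x / r) ^ r := by
        gcongr
        exact exp_one_mul_le_exp
    _ = (r / (exp 1 * c)) ^ r * exp (c * x) := by
        rw [← exp_mul, div_mul_cancel₀ _ hr.ne']

theorem rpow_mul_exp_neg_mul_le {r c x : ℝ} (hr : 0 ≤ r) (hc : 0 < c) (hx : 0 ≤ x) :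
    x ^ r * exp (-(c * x)) ≤ (r / (exp 1 * c)) ^ r := by
  rcases hr.eq_or_lt with rfl | hr
  · simpa using mul_nonneg hc.le hx
  · rw [← le_div_iff₀ (exp_pos _), exp_neg, div_inv_eq_mul]
    exact rpow_le_mul_exp hr hc hx

theorem rpow_mul_exp_neg_mul_rpow_le {a γ q t m : ℝ} (ha : 0 < a) (hγ : 0 < γ) (hq : 0 ≤ q)
    (ht : 0 < t) (hm : 0 ≤ m) :
    m ^ q * exp (-(a * m ^ γ * t)) ≤ (q / (exp 1 * γ * a)) ^ (q / γ) * t ^ (-(q / γ)) := by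
  have h := rpow_mul_exp_neg_mul_le (div_nonneg hq hγ.le) (mul_pos ha ht) (rpow_nonneg hm γ)
  rw [← rpow_mul hm, mul_div_cancel₀ _ hγ.ne'] at h
  convert h using 2
  · ring_nf
  · rw [rpow_neg ht.le, ← inv_rpow ht.le, ← mul_rpow (by positivity) (by positivity)]
    congr 1
    field_simp

theorem rpow_mul_exp_neg_mul_le_of_absorption {a₀ γ m₀ q α t m : ℝ} (ha₀ : 0 < a₀)
    (hγ : 0 < γ) (hm₀ : 0 ≤ m₀) (hq : 0 ≤ q) (hα : 0 ≤ α) (hαm : m₀ ≤ m → a₀ * m ^ γ ≤ α)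
    (ht : 0 < t) (hm : 0 ≤ m) :
    m ^ q * exp (-(α * t)) ≤
      m₀ ^ q + (q / (exp 1 * γ * a₀)) ^ (q / γ) * t ^ (-(q / γ)) := by
  have hC : 0 ≤ (q / (exp 1 * γ * a₀)) ^ (q / γ) * t ^ (-(q / γ)) := by positivity
  rcases le_or_gt m₀ m with hlarge | hsmall
  · have hexp : exp (-(α * t)) ≤ exp (-(a₀ * m ^ γ * t)) := by
      gcongr
      exact hαm hlarge
    calc m ^ q * exp (-(α * t)) ≤ m ^ q * exp (-(a₀ * m ^ γ * t)) := by gcongr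
      _ ≤ _ := rpow_mul_exp_neg_mul_rpow_le ha₀ hγ hq ht hm
      _ ≤ _ := le_add_of_nonneg_left (rpow_nonneg hm₀ q)
  · have hexp : exp (-(α * t)) ≤ 1 := exp_le_one_iff.mpr (by nlinarith)
    calc m ^ q * exp (-(α * t)) ≤ m ^ q := mul_le_of_le_one_right (rpow_nonneg hm q) hexp
      _ ≤ m₀ ^ q := rpow_le_rpow hm hsmall.le hq
      _ ≤ _ := le_add_of_nonneg_right hC

theorem mul_one_add_rpow_add_le_mul {E B m p q : ℝ} (hE : E ≤ 1) (hB : 0 ≤ B) (hm : 0 < m)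
    (hEB : m ^ q * E ≤ B) :
    E * (1 + m ^ (p + q)) ≤ (1 + B) * (1 + m ^ p) := by
  have hmp : 0 ≤ m ^ p := rpow_nonneg hm.le p
  rw [rpow_add hm]
  nlinarith [mul_le_mul_of_nonneg_left hEB hmp]

theorem setLIntegral_ofReal_le_ofReal_mul {α : Type*} [MeasurableSpace α] {μ : Measure α}
    {s : Set α} {f g : α → ℝ} {K : ℝ} (hs : MeasurableSet s) (hK : 0 ≤ K)
    (hfg : ∀ x ∈ s, f x ≤ K * g x) :
    ∫⁻ x in s, ENNReal.ofReal (f x) ∂μ ≤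
      ENNReal.ofReal K * ∫⁻ x in s, ENNReal.ofReal (g x) ∂μ := by
  rw [← lintegral_const_mul' _ _ ENNReal.ofReal_ne_top]
  refine setLIntegral_mono' hs fun x hx => ?_
  rw [← ENNReal.ofReal_mul hK]
  exact ENNReal.ofReal_le_ofReal (hfg x hx)

theorem stmt_14_general (a₀ γ m₀ p q : ℝ) (ha₀ : 0 < a₀) (hγ : 0 < γ) (hm₀ : 1 ≤ m₀)
    (hq : 0 ≤ q)
    (α₁ : ℝ → ℝ) (hα₁nonneg : ∀ m, 0 ≤ α₁ m)
    (hα₁ : ∀ m ≥ m₀, a₀ * m ^ γ ≤ α₁ m) :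
    ∃ C₁ > (0 : ℝ), ∃ C₂ > (0 : ℝ), ∀ g : ℝ → ℝ, Measurable g → (∀ m, 0 ≤ g m) →
      ∀ t > (0 : ℝ),
      ∫⁻ m in Set.Ioi (0 : ℝ),
          ENNReal.ofReal (Real.exp (-(α₁ m * t)) * g m * (1 + m ^ (p + q)))
        ≤ ENNReal.ofReal (C₁ + C₂ * t ^ (-(q / γ))) *
            ∫⁻ m in Set.Ioi (0 : ℝ), ENNReal.ofReal (g m * (1 + m ^ p)) := by
  have hm₀q : 0 < m₀ ^ q := rpow_pos_of_pos (by linarith) q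
  have hC₂ : 0 < (q / (exp 1 * γ * a₀)) ^ (q / γ) := by
    rcases hq.eq_or_lt with rfl | hq
    · simp
    · positivity
  refine ⟨1 + m₀ ^ q, by positivity, _, hC₂, fun g _ hg t ht => ?_⟩
  refine setLIntegral_ofReal_le_ofReal_mul measurableSet_Ioi (by positivity) fun m hm => ?_
  have hweight := mul_one_add_rpow_add_le_mul (p := p)
    (exp_le_one_iff.mpr (neg_nonpos.mpr (mul_nonneg (hα₁nonneg m) ht.le)))
    (by positivity) hm
    (rpow_mul_exp_neg_mul_le_of_absorption ha₀ hγ (by linarith) hq (hα₁nonneg m) (hα₁ m) ht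
      hm.out.le)
  rw [← add_assoc] at hweight
  calc exp (-(α₁ m * t)) * g m * (1 + m ^ (p + q))
      = exp (-(α₁ m * t)) * (1 + m ^ (p + q)) * g m := by ring
    _ ≤ (1 + m₀ ^ q + (q / (exp 1 * γ * a₀)) ^ (q / γ) * t ^ (-(q / γ))) * (1 + m ^ p) * g m :=
        mul_le_mul_of_nonneg_right hweight (hg m)
    _ = _ := by ring

/-- Moment-regularisation estimate for absorption semigroups: if `α₁(m) ≥ a₀ m^γ` for
`m ≥ m₀`, then integrating `e^{-α₁(m)t} g(m)` against the weight `1+m^{p+q}` is bounded by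
`(C₁ + C₂ t^{-q/γ})` times the integral of `g` against `1+m^p`. -/
theorem stmt_14 (a₀ γ m₀ p q : ℝ) (ha₀ : 0 < a₀) (hγ : 0 < γ) (hm₀ : 1 ≤ m₀)
    (hp : 0 ≤ p) (hq : 0 ≤ q)
    (α₁ : ℝ → ℝ) (hα₁meas : Measurable α₁) (hα₁nonneg : ∀ m, 0 ≤ α₁ m)
    (hα₁ : ∀ m ≥ m₀, a₀ * m ^ γ ≤ α₁ m) :
    ∃ C₁ > (0 : ℝ), ∃ C₂ > (0 : ℝ), ∀ g : ℝ → ℝ, Measurable g → (∀ m, 0 ≤ g m) →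
      ∀ t > (0 : ℝ),
      ∫⁻ m in Set.Ioi (0 : ℝ),
          ENNReal.ofReal (Real.exp (-(α₁ m * t)) * g m * (1 + m ^ (p + q)))
        ≤ ENNReal.ofReal (C₁ + C₂ * t ^ (-(q / γ))) *
            ∫⁻ m in Set.Ioi (0 : ℝ), ENNReal.ofReal (g m * (1 + m ^ p)) :=
  stmt_14_general a₀ γ m₀ p q ha₀ hγ hm₀ hq α₁ hα₁nonneg hα₁
end

section
/- Let k₀ ≥ 0, p ≥ 0, q ≥ 0 and set r = p + q. Let k : [0,∞)² → [0,∞) be measurable with k(m, s) ≤ k₀ (1 + m^q)(1 + s^q) for all m, s ≥ 0. Then there exists a constant c (depending only on k₀, p, q) such that for all measurable F, G : [0,∞) → [0,∞): (1/2) ∫₀^∞ ( ∫₀^m k(m − s, s) F(m − s) G(s) ds ) (1 + m^p) dm ≤ c ( ∫₀^∞ F(m)(1 + m^r) dm ) ( ∫₀^∞ G(m)(1 + m^r) dm ). -/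
/-!
For `0 ≤ s ≤ m` the weight `1 + m ^ p` of the product is at most `2 ^ p (1 + (m-s) ^ p)(1 + s ^ p)`,
and `(1 + x ^ p)(1 + x ^ q) ≤ 2 (1 + x ^ (p+q))`, so the kernel bound turns the integrand into
`4·2^p k₀ · Φ(m-s) Ψ(s)` with `Φ = F (1 + · ^ r)`, `Ψ = G (1 + · ^ r)`. The double integral of
`Φ(m-s) Ψ(s)` over `0 < s ≤ m` is dominated by the integral of the convolution of the
restrictions of `Ψ` and `Φ` to the half-line, which by Tonelli and translation invariance equals
`(∫ Φ)(∫ Ψ)`.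
-/

open MeasureTheory Set
open scoped ENNReal

namespace MeasureTheory

theorem lintegral_lconvolution {G : Type*} [MeasurableSpace G] [AddGroup G] [MeasurableAdd₂ G]
    [MeasurableNeg G] {μ : Measure G} [μ.IsAddLeftInvariant] [SFinite μ] {f g : G → ℝ≥0∞}
    (hf : Measurable f) (hg : Measurable g) :
    ∫⁻ x, (f ⋆ₗ[μ] g) x ∂μ = (∫⁻ x, f x ∂μ) * ∫⁻ x, g x ∂μ := by
  simp only [lconvolution_def]
  rw [lintegral_lintegral_swap (by fun_prop), ← lintegral_mul_const _ hf]
  refine lintegral_congr fun y => ?_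
  rw [lintegral_const_mul _ (by fun_prop), lintegral_add_left_eq_self g (-y)]

end MeasureTheory

theorem setLIntegral_Ioc_sub_mul_le_lconvolution (Φ Ψ : ℝ → ℝ≥0∞) (m : ℝ) :
    ∫⁻ s in Ioc 0 m, Φ (m - s) * Ψ s ≤ ((Ioi 0).indicator Ψ ⋆ₗ (Ici 0).indicator Φ) m := by
  rw [lconvolution_def, ← lintegral_indicator measurableSet_Ioc]
  refine lintegral_mono fun s => ?_
  by_cases hs : s ∈ Ioc 0 m
  · have hms : 0 ≤ -s + m := by linarith [hs.2]
    simp [hs, hs.1, hms, mul_comm, sub_eq_neg_add]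
  · simp [hs]

theorem lintegral_Ioi_setLIntegral_Ioc_sub_mul_le {Φ Ψ : ℝ → ℝ≥0∞} (hΦ : Measurable Φ)
    (hΨ : Measurable Ψ) :
    ∫⁻ m in Ioi 0, ∫⁻ s in Ioc 0 m, Φ (m - s) * Ψ s
      ≤ (∫⁻ x in Ioi 0, Φ x) * ∫⁻ x in Ioi 0, Ψ x :=
  calc ∫⁻ m in Ioi 0, ∫⁻ s in Ioc 0 m, Φ (m - s) * Ψ s
      ≤ ∫⁻ m, ((Ioi 0).indicator Ψ ⋆ₗ (Ici 0).indicator Φ) m :=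
        (lintegral_mono fun m => setLIntegral_Ioc_sub_mul_le_lconvolution Φ Ψ m).trans
          (setLIntegral_le_lintegral _ _)
    _ = (∫⁻ x in Ioi 0, Ψ x) * ∫⁻ x in Ici 0, Φ x := by
        rw [lintegral_lconvolution (hΨ.indicator measurableSet_Ioi)
          (hΦ.indicator measurableSet_Ici), lintegral_indicator measurableSet_Ioi,
          lintegral_indicator measurableSet_Ici]
    _ = (∫⁻ x in Ioi 0, Φ x) * ∫⁻ x in Ioi 0, Ψ x := by
        rw [mul_comm, setLIntegral_congr (Ioi_ae_eq_Ici (a := (0 : ℝ))).symm]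

theorem one_add_rpow_add_le {a b p : ℝ} (ha : 0 ≤ a) (hb : 0 ≤ b) (hp : 0 ≤ p) :
    1 + (a + b) ^ p ≤ 2 ^ p * ((1 + a ^ p) * (1 + b ^ p)) := by
  have hap := Real.rpow_nonneg ha p
  have hbp := Real.rpow_nonneg hb p
  have h2p : 1 ≤ (2 : ℝ) ^ p := Real.one_le_rpow one_le_two hp
  have hsum : (a + b) ^ p ≤ 2 ^ p * (a ^ p + b ^ p) :=
    calc (a + b) ^ p ≤ (2 * max a b) ^ p := by
          gcongr
          linarith [le_max_left a b, le_max_right a b]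
      _ = 2 ^ p * max a b ^ p := Real.mul_rpow zero_le_two (ha.trans (le_max_left a b))
      _ ≤ 2 ^ p * (a ^ p + b ^ p) := by
          gcongr
          rcases max_choice a b with h | h <;> rw [h] <;> linarith
  nlinarith [mul_nonneg (mul_nonneg (zero_le_one.trans h2p) hap) hbp]

theorem one_add_rpow_mul_one_add_rpow_le {a p q : ℝ} (ha : 0 ≤ a) (hp : 0 ≤ p) (hq : 0 ≤ q) :
    (1 + a ^ p) * (1 + a ^ q) ≤ 2 * (1 + a ^ (p + q)) := by
  rw [Real.rpow_add_of_nonneg ha hp hq]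
  -- `a ^ p` and `a ^ q` lie on the same side of `1`
  have hsign : 0 ≤ (a ^ p - 1) * (a ^ q - 1) := by
    rcases le_total 1 a with h | h
    · exact mul_nonneg (sub_nonneg.2 (Real.one_le_rpow h hp)) (sub_nonneg.2 (Real.one_le_rpow h hq))
    · exact mul_nonneg_of_nonpos_of_nonpos (sub_nonpos.2 (Real.rpow_le_one ha h hp))
        (sub_nonpos.2 (Real.rpow_le_one ha h hq))
  nlinarith

theorem mul_one_add_rpow_add_le {k₀ p q a b K : ℝ} (hk₀ : 0 ≤ k₀) (hp : 0 ≤ p) (hq : 0 ≤ q)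
    (ha : 0 ≤ a) (hb : 0 ≤ b) (hK : K ≤ k₀ * (1 + a ^ q) * (1 + b ^ q)) :
    K * (1 + (a + b) ^ p) ≤ 4 * 2 ^ p * k₀ * ((1 + a ^ (p + q)) * (1 + b ^ (p + q))) := by
  have hap := Real.rpow_nonneg ha p
  have hbp := Real.rpow_nonneg hb p
  have haq := Real.rpow_nonneg ha q
  have hbq := Real.rpow_nonneg hb q
  have habp := Real.rpow_nonneg (add_nonneg ha hb) p
  calc K * (1 + (a + b) ^ p)
      ≤ k₀ * (1 + a ^ q) * (1 + b ^ q) * (2 ^ p * ((1 + a ^ p) * (1 + b ^ p))) :=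
        mul_le_mul hK (one_add_rpow_add_le ha hb hp) (by positivity) (by positivity)
    _ = 2 ^ p * k₀ * (((1 + a ^ p) * (1 + a ^ q)) * ((1 + b ^ p) * (1 + b ^ q))) := by ring
    _ ≤ 2 ^ p * k₀ * ((2 * (1 + a ^ (p + q))) * (2 * (1 + b ^ (p + q)))) := by
        gcongr ?_ * (?_ * ?_)
        · exact one_add_rpow_mul_one_add_rpow_le ha hp hq
        · exact one_add_rpow_mul_one_add_rpow_le hb hp hq
    _ = 4 * 2 ^ p * k₀ * ((1 + a ^ (p + q)) * (1 + b ^ (p + q))) := by ring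

theorem ofReal_mul_one_add_rpow_add_le {k₀ p q a b K x y : ℝ} (hk₀ : 0 ≤ k₀) (hp : 0 ≤ p)
    (hq : 0 ≤ q) (ha : 0 ≤ a) (hb : 0 ≤ b) (hx : 0 ≤ x) (hy : 0 ≤ y)
    (hK : K ≤ k₀ * (1 + a ^ q) * (1 + b ^ q)) :
    ENNReal.ofReal (K * x * y) * ENNReal.ofReal (1 + (a + b) ^ p)
      ≤ ENNReal.ofReal (4 * 2 ^ p * k₀) *
          (ENNReal.ofReal (x * (1 + a ^ (p + q))) * ENNReal.ofReal (y * (1 + b ^ (p + q)))) := by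
  have hweight := mul_le_mul_of_nonneg_right (mul_one_add_rpow_add_le hk₀ hp hq ha hb hK)
    (mul_nonneg hx hy)
  have hxa : 0 ≤ x * (1 + a ^ (p + q)) := by positivity
  rw [← ENNReal.ofReal_mul' (by positivity), ← ENNReal.ofReal_mul hxa,
    ← ENNReal.ofReal_mul (by positivity)]
  exact ENNReal.ofReal_le_ofReal (by linarith)

theorem setLIntegral_Ioc_mul_one_add_rpow_le {k₀ p q : ℝ} (hk₀ : 0 ≤ k₀) (hp : 0 ≤ p)
    (hq : 0 ≤ q) {k : ℝ → ℝ → ℝ}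
    (hk : ∀ m ≥ (0 : ℝ), ∀ s ≥ (0 : ℝ), k m s ≤ k₀ * (1 + m ^ q) * (1 + s ^ q)) {F G : ℝ → ℝ}
    (hF₀ : ∀ m, 0 ≤ F m) (hG₀ : ∀ m, 0 ≤ G m) (m : ℝ) :
    (∫⁻ s in Ioc 0 m, ENNReal.ofReal (k (m - s) s * F (m - s) * G s)) *
        ENNReal.ofReal (1 + m ^ p)
      ≤ ENNReal.ofReal (4 * 2 ^ p * k₀) * ∫⁻ s in Ioc 0 m,
          ENNReal.ofReal (F (m - s) * (1 + (m - s) ^ (p + q))) *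
            ENNReal.ofReal (G s * (1 + s ^ (p + q))) := by
  rw [← lintegral_mul_const' _ _ ENNReal.ofReal_ne_top,
    ← lintegral_const_mul' _ _ ENNReal.ofReal_ne_top]
  refine setLIntegral_mono' measurableSet_Ioc fun s ⟨hs₀, hsm⟩ => ?_
  have hms : 0 ≤ m - s := sub_nonneg.2 hsm
  simpa only [sub_add_cancel] using ofReal_mul_one_add_rpow_add_le hk₀ hp hq hms hs₀.le
    (hF₀ _) (hG₀ _) (hk _ hms _ hs₀.le)

theorem stmt_16_general (k₀ p q : ℝ) (hk₀ : 0 ≤ k₀) (hp : 0 ≤ p) (hq : 0 ≤ q)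
    (k : ℝ → ℝ → ℝ)
    (hk : ∀ m ≥ (0 : ℝ), ∀ s ≥ (0 : ℝ), k m s ≤ k₀ * (1 + m ^ q) * (1 + s ^ q)) :
    ∃ c > (0 : ℝ), ∀ F G : ℝ → ℝ, Measurable F → Measurable G →
      (∀ m, 0 ≤ F m) → (∀ m, 0 ≤ G m) →
      ENNReal.ofReal (1 / 2) *
        ∫⁻ m in Set.Ioi (0 : ℝ),
          (∫⁻ s in Set.Ioc (0 : ℝ) m, ENNReal.ofReal (k (m - s) s * F (m - s) * G s)) *
            ENNReal.ofReal (1 + m ^ p)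
      ≤ ENNReal.ofReal c *
          ((∫⁻ m in Set.Ioi (0 : ℝ), ENNReal.ofReal (F m * (1 + m ^ (p + q)))) *
            ∫⁻ m in Set.Ioi (0 : ℝ), ENNReal.ofReal (G m * (1 + m ^ (p + q)))) := by
  refine ⟨2 * 2 ^ p * k₀ + 1, by positivity, fun F G hF hG hF₀ hG₀ => ?_⟩
  set Φ : ℝ → ℝ≥0∞ := fun x => ENNReal.ofReal (F x * (1 + x ^ (p + q)))
  set Ψ : ℝ → ℝ≥0∞ := fun x => ENNReal.ofReal (G x * (1 + x ^ (p + q)))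
  calc ENNReal.ofReal (1 / 2) * ∫⁻ m in Ioi 0,
        (∫⁻ s in Ioc 0 m, ENNReal.ofReal (k (m - s) s * F (m - s) * G s)) *
          ENNReal.ofReal (1 + m ^ p)
      ≤ ENNReal.ofReal (1 / 2) * ∫⁻ m in Ioi 0,
          ENNReal.ofReal (4 * 2 ^ p * k₀) * ∫⁻ s in Ioc 0 m, Φ (m - s) * Ψ s := by
        gcongr _ * ?_
        exact lintegral_mono (setLIntegral_Ioc_mul_one_add_rpow_le hk₀ hp hq hk hF₀ hG₀)
    _ = ENNReal.ofReal (2 * 2 ^ p * k₀) * ∫⁻ m in Ioi 0, ∫⁻ s in Ioc 0 m, Φ (m - s) * Ψ s := by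
        rw [lintegral_const_mul' _ _ ENNReal.ofReal_ne_top, ← mul_assoc,
          ← ENNReal.ofReal_mul (by norm_num)]
        congr 2
        ring
    _ ≤ ENNReal.ofReal (2 * 2 ^ p * k₀ + 1) * ((∫⁻ x in Ioi 0, Φ x) * ∫⁻ x in Ioi 0, Ψ x) := by
        gcongr
        · linarith
        · exact lintegral_Ioi_setLIntegral_Ioc_sub_mul_le (by fun_prop) (by fun_prop)

/-- Weighted `L¹` bound for the coagulation gain term: if `k(m,s) ≤ k₀(1+m^q)(1+s^q)`,
then `(1/2)∫₀^∞ (∫₀^m k(m-s,s)F(m-s)G(s) ds)(1+m^p) dm` is bounded by a constant times the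
product of the weighted integrals of `F` and `G` with weight `1+m^{p+q}`. -/
theorem stmt_16 (k₀ p q : ℝ) (hk₀ : 0 ≤ k₀) (hp : 0 ≤ p) (hq : 0 ≤ q)
    (k : ℝ → ℝ → ℝ) (hkmeas : Measurable (Function.uncurry k))
    (hknonneg : ∀ m s, 0 ≤ k m s)
    (hk : ∀ m ≥ (0 : ℝ), ∀ s ≥ (0 : ℝ), k m s ≤ k₀ * (1 + m ^ q) * (1 + s ^ q)) :
    ∃ c > (0 : ℝ), ∀ F G : ℝ → ℝ, Measurable F → Measurable G →
      (∀ m, 0 ≤ F m) → (∀ m, 0 ≤ G m) →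
      ENNReal.ofReal (1 / 2) *
        ∫⁻ m in Set.Ioi (0 : ℝ),
          (∫⁻ s in Set.Ioc (0 : ℝ) m, ENNReal.ofReal (k (m - s) s * F (m - s) * G s)) *
            ENNReal.ofReal (1 + m ^ p)
      ≤ ENNReal.ofReal c *
          ((∫⁻ m in Set.Ioi (0 : ℝ), ENNReal.ofReal (F m * (1 + m ^ (p + q)))) *
            ∫⁻ m in Set.Ioi (0 : ℝ), ENNReal.ofReal (G m * (1 + m ^ (p + q)))) :=
  stmt_16_general k₀ p q hk₀ hp hq k hk
end
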